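/- arXiv:1512.05921 — 2 statements merged into one kernel-verified Lean document; each statement's English description precedes it below -/
import Mathlib

section
/- Let ℓ ≥ 1, let F be an ℓ-uniform hypergraph on the vertex set Z/nZ with maximum vertex degree at most D, and let U be a random subset of Z/nZ where each element is included independently with probability p. Then with probability at least 1 − 2Dn^{−4}, the number of edges of F entirely contained in U is at most 5D(p^ℓ n/ℓ + log n). -/
/-!
Let `X` be the number of edges of `F` inside `U`. The indicator of `e ⊆ U` depends only on the
coordinates in `e`, and each coordinate lies in at most `D` edges, so Finner's generalisation of
Hölder's inequality to product measures gives
`𝔼 exp (X / D) ≤ ∏ₑ (𝔼 exp 𝟙[e ⊆ U]) ^ (1 / D) ≤ exp ((exp 1 - 1) p ^ ℓ |F| / D)`.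
Double counting gives `|F| ℓ ≤ n D`, so Markov's inequality at the threshold
`5 D (p ^ ℓ n / ℓ + log n)` bounds the failure probability by `n ^ (-5)`.

Finner's inequality is proved by integrating out one coordinate at a time: only the at most `D`
factors that involve that coordinate vary, and Hölder's inequality with exponents `1 / D` applies
to them.
-/

open MeasureTheory Finset
open scoped ENNReal

/-- The Bernoulli measure with parameter `p` (truncated to `[0,1]`) on `Bool`. -/
noncomputable def bernoulliMeasure (p : ℝ) : MeasureTheory.Measure Bool :=
  (PMF.bernoulli (min (Real.toNNReal p) 1) (min_le_right _ _)).toMeasure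

/-- The law of the binomial random subset `Z_{n,p}` of `ZMod n`, encoded as a random
indicator function `ZMod n → Bool` with i.i.d. Bernoulli(p) coordinates. -/
noncomputable def binomMeasure (n : ℕ) [NeZero n] (p : ℝ) :
    MeasureTheory.Measure (ZMod n → Bool) :=
  MeasureTheory.Measure.pi fun _ => bernoulliMeasure p

instance (p : ℝ) : IsProbabilityMeasure (bernoulliMeasure p) :=
  PMF.toMeasure.isProbabilityMeasure _

instance (n : ℕ) [NeZero n] (p : ℝ) : IsProbabilityMeasure (binomMeasure n p) := by
  unfold binomMeasure; infer_instance

theorem ENNReal.lintegral_prod_rpow_inv_le_of_card_le {α ι : Type*} [MeasurableSpace α]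
    {μ : Measure α} [IsProbabilityMeasure μ] {t : Finset ι} {f : ι → α → ℝ≥0∞}
    (hf : ∀ i ∈ t, AEMeasurable (f i) μ) {D : ℕ} (ht : #t ≤ D) :
    ∫⁻ a, ∏ i ∈ t, f i a ^ (D⁻¹ : ℝ) ∂μ ≤ ∏ i ∈ t, (∫⁻ a, f i a ∂μ) ^ (D⁻¹ : ℝ) := by
  -- Hölder with the constant function `1` carrying the spare exponent `1 - #t / D`.
  let g : Option ι → α → ℝ≥0∞ := fun o => o.elim 1 f
  let w : Option ι → ℝ := fun o => o.elim (1 - #t / D) fun _ => (D : ℝ)⁻¹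
  have hw : ∑ o ∈ insertNone t, w o = 1 := by
    simp only [sum_insertNone, w, Option.elim, sum_const, nsmul_eq_mul]
    ring
  have hw0 : ∀ o ∈ insertNone t, 0 ≤ w o := by
    rintro (_ | i) -
    · simp only [w, Option.elim, sub_nonneg]
      exact div_le_one_of_le₀ (by exact_mod_cast ht) (Nat.cast_nonneg D)
    · simp only [w, Option.elim]
      positivity
  have hg : ∀ o ∈ insertNone t, AEMeasurable (g o) μ := by
    rintro (_ | i) hi
    · exact aemeasurable_const
    · exact hf i (by simpa using hi)
  simpa [prod_insertNone, g, w] using ENNReal.lintegral_prod_norm_pow_le _ hg hw hw0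

theorem DependsOn.update_of_notMem {δ β : Type*} [DecidableEq δ] {X : δ → Type*}
    {f : (∀ i, X i) → β} {A : Set δ} (hf : DependsOn f A) {i : δ} (hi : i ∉ A) (x : ∀ i, X i)
    (y : X i) : f (Function.update x i y) = f x :=
  hf fun _ hj => Function.update_of_ne (ne_of_mem_of_not_mem hj hi) _ _

section Finner

variable {δ : Type*} [DecidableEq δ] {X : δ → Type*} [∀ i, MeasurableSpace (X i)]
  {μ : ∀ i, Measure (X i)}

theorem DependsOn.lmarginal {f : (∀ i, X i) → ℝ≥0∞} {A : Set δ} (hf : DependsOn f A)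
    (s : Finset δ) : DependsOn (∫⋯∫⁻_s, f ∂μ) (A \ s) :=
  fun _ _ h => lintegral_congr fun y => hf.updateFinset y h

variable [∀ i, IsProbabilityMeasure (μ i)] {ι : Type*} {K : Finset ι} {A : ι → Finset δ}
  {f : ι → (∀ i, X i) → ℝ≥0∞} {D : ℕ}

theorem lmarginal_prod_rpow_inv_le_of_dependsOn (hf : ∀ k ∈ K, Measurable (f k))
    (hA : ∀ k ∈ K, DependsOn (f k) (A k)) (hD : ∀ i, #{k ∈ K | i ∈ A k} ≤ D)
    (s : Finset δ) (x : ∀ i, X i) :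
    (∫⋯∫⁻_s, (fun ω => ∏ k ∈ K, f k ω ^ (D⁻¹ : ℝ)) ∂μ) x
      ≤ ∏ k ∈ K, (∫⋯∫⁻_s, f k ∂μ) x ^ (D⁻¹ : ℝ) := by
  induction s using Finset.induction generalizing x with
  | empty => simp
  | insert v s hv ih =>
    set H : ι → (∀ i, X i) → ℝ≥0∞ := fun k => ∫⋯∫⁻_s, f k ∂μ
    have hH : ∀ k ∈ K, Measurable (H k) := fun k hk => (hf k hk).lmarginal μ
    have hH_update : ∀ k ∈ K, v ∉ A k → ∀ y, H k (Function.update x v y) = H k x :=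
      fun k hk hvk => ((hA k hk).lmarginal s).update_of_notMem (fun h => hvk h.1) x
    have hins : ∀ k ∈ K, (∫⋯∫⁻_(insert v s), f k ∂μ) x
        = ∫⁻ y, H k (Function.update x v y) ∂μ v :=
      fun k hk => by rw [lmarginal_insert _ (hf k hk) hv]
    rw [lmarginal_insert _ (measurable_prod K fun k hk => (hf k hk).pow_const _) hv,
      ← prod_filter_mul_prod_filter_not K (v ∈ A ·)]
    calc ∫⁻ y, (∫⋯∫⁻_s, (fun ω => ∏ k ∈ K, f k ω ^ (D⁻¹ : ℝ)) ∂μ) (Function.update x v y) ∂μ v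
        ≤ ∫⁻ y, ∏ k ∈ K, H k (Function.update x v y) ^ (D⁻¹ : ℝ) ∂μ v :=
          lintegral_mono fun y => ih _
      _ = ∫⁻ y, (∏ k ∈ K with v ∈ A k, H k (Function.update x v y) ^ (D⁻¹ : ℝ))
            * ∏ k ∈ K with v ∉ A k, H k x ^ (D⁻¹ : ℝ) ∂μ v := by
          refine lintegral_congr fun y => ?_
          rw [← prod_filter_mul_prod_filter_not K (v ∈ A ·)]
          congr 1
          refine prod_congr rfl fun k hk => ?_
          rw [mem_filter] at hk
          rw [hH_update k hk.1 hk.2]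
      _ = (∫⁻ y, ∏ k ∈ K with v ∈ A k, H k (Function.update x v y) ^ (D⁻¹ : ℝ) ∂μ v)
            * ∏ k ∈ K with v ∉ A k, H k x ^ (D⁻¹ : ℝ) :=
          lintegral_mul_const _ (measurable_prod _ fun k hk =>
            ((hH k (mem_filter.mp hk).1).comp (measurable_update x)).pow_const _)
      _ ≤ (∏ k ∈ K with v ∈ A k, (∫⁻ y, H k (Function.update x v y) ∂μ v) ^ (D⁻¹ : ℝ))
            * ∏ k ∈ K with v ∉ A k, H k x ^ (D⁻¹ : ℝ) := by
          gcongr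
          exact ENNReal.lintegral_prod_rpow_inv_le_of_card_le (fun k hk =>
            ((hH k (mem_filter.mp hk).1).comp (measurable_update x)).aemeasurable) (hD v)
      _ = _ := by
          congr 1 <;> refine prod_congr rfl fun k hk => ?_ <;> rw [mem_filter] at hk
          · rw [hins k hk.1]
          · simp_rw [hins k hk.1, hH_update k hk.1 hk.2, lintegral_const, measure_univ, mul_one]

theorem lintegral_prod_rpow_inv_le_of_dependsOn [Fintype δ] (hf : ∀ k ∈ K, Measurable (f k))
    (hA : ∀ k ∈ K, DependsOn (f k) (A k)) (hD : ∀ i, #{k ∈ K | i ∈ A k} ≤ D) :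
    ∫⁻ ω, ∏ k ∈ K, f k ω ^ (D⁻¹ : ℝ) ∂Measure.pi μ
      ≤ ∏ k ∈ K, (∫⁻ ω, f k ω ∂Measure.pi μ) ^ (D⁻¹ : ℝ) := by
  have x : ∀ i, X i := fun i => (nonempty_of_isProbabilityMeasure (μ i)).some
  simp_rw [lintegral_eq_lmarginal_univ x]
  exact lmarginal_prod_rpow_inv_le_of_dependsOn hf hA hD univ x

end Finner

theorem ENNReal.ofReal_exp_rpow (x r : ℝ) :
    ENNReal.ofReal (Real.exp x) ^ r = ENNReal.ofReal (Real.exp (x * r)) := by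
  rw [ENNReal.ofReal_rpow_of_pos (Real.exp_pos x), ← Real.exp_mul]

theorem ENNReal.prod_ofReal_exp {ι : Type*} (s : Finset ι) (f : ι → ℝ) :
    ∏ i ∈ s, ENNReal.ofReal (Real.exp (f i)) = ENNReal.ofReal (Real.exp (∑ i ∈ s, f i)) := by
  rw [Real.exp_sum, ENNReal.ofReal_prod_of_nonneg fun i _ => (Real.exp_pos _).le]

theorem lintegral_ofReal_exp_indicator_le {Ω : Type*} [MeasurableSpace Ω] {μ : Measure Ω}
    [IsProbabilityMeasure μ] {s : Set Ω} (hs : MeasurableSet s) {q : ℝ} (hq : 0 ≤ q)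
    (hμs : μ s ≤ ENNReal.ofReal q) :
    ∫⁻ ω, ENNReal.ofReal (Real.exp (s.indicator 1 ω)) ∂μ
      ≤ ENNReal.ofReal (Real.exp ((Real.exp 1 - 1) * q)) := by
  have he : 0 ≤ Real.exp 1 - 1 := by linarith [Real.add_one_le_exp 1]
  have hpt : ∀ ω, ENNReal.ofReal (Real.exp (s.indicator 1 ω))
      = 1 + s.indicator (fun _ => ENNReal.ofReal (Real.exp 1 - 1)) ω := by
    intro ω
    by_cases hω : ω ∈ s
    · rw [Set.indicator_of_mem hω, Set.indicator_of_mem hω, ← ENNReal.ofReal_one,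
        ← ENNReal.ofReal_add zero_le_one he, Pi.one_apply, add_sub_cancel]
    · simp [hω]
  calc ∫⁻ ω, ENNReal.ofReal (Real.exp (s.indicator 1 ω)) ∂μ
      = 1 + ENNReal.ofReal (Real.exp 1 - 1) * μ s := by
        simp_rw [hpt]
        rw [lintegral_add_left measurable_const, lintegral_indicator_const hs, lintegral_const,
          measure_univ, one_mul]
    _ ≤ ENNReal.ofReal (1 + (Real.exp 1 - 1) * q) := by
        rw [ENNReal.ofReal_add zero_le_one (mul_nonneg he hq), ENNReal.ofReal_one,
          ENNReal.ofReal_mul he]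
        gcongr
    _ ≤ ENNReal.ofReal (Real.exp ((Real.exp 1 - 1) * q)) := by
        gcongr
        linarith [Real.add_one_le_exp ((Real.exp 1 - 1) * q)]

theorem ofReal_one_sub_le_measure {Ω : Type*} [MeasurableSpace Ω] {μ : Measure Ω}
    [IsProbabilityMeasure μ] {s : Set Ω} (hs : MeasurableSet s) {β : ℝ} (hβ : 0 ≤ β)
    (h : μ sᶜ ≤ ENNReal.ofReal β) : ENNReal.ofReal (1 - β) ≤ μ s :=
  calc ENNReal.ofReal (1 - β) = 1 - ENNReal.ofReal β := by
        rw [ENNReal.ofReal_sub _ hβ, ENNReal.ofReal_one]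
    _ ≤ 1 - μ sᶜ := tsub_le_tsub_left h 1
    _ = μ s := by rw [← prob_compl_eq_one_sub hs.compl, compl_compl]

theorem bernoulliMeasure_singleton_true_le (p : ℝ) :
    bernoulliMeasure p {true} ≤ ENNReal.ofReal p := by
  rw [bernoulliMeasure, PMF.toMeasure_apply_singleton _ _ (measurableSet_singleton _)]
  exact ENNReal.coe_le_coe.mpr (min_le_left _ _)

section RandomSubset

variable {α : Type*} [Fintype α] [DecidableEq α] {p : ℝ} {ℓ D : ℕ} {F : Finset (Finset α)}

theorem pi_bernoulliMeasure_forall_mem_le (e : Finset α) :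
    Measure.pi (fun _ : α => bernoulliMeasure p) {ω | ∀ v ∈ e, ω v = true}
      ≤ ENNReal.ofReal p ^ #e := by
  have hcyl : {ω : α → Bool | ∀ v ∈ e, ω v = true} = (e : Set α).pi fun _ => {true} := by
    ext; simp
  rw [hcyl, ← Set.univ_pi_ite, Measure.pi_pi, ← prod_const]
  simp_rw [apply_ite (bernoulliMeasure p), measure_univ, mem_coe, Fintype.prod_ite_mem]
  exact prod_le_prod' fun _ _ => bernoulliMeasure_singleton_true_le p

theorem card_mul_le_card_mul_of_degree_le (hunif : ∀ e ∈ F, #e = ℓ)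
    (hdeg : ∀ v, #{e ∈ F | v ∈ e} ≤ D) : #F * ℓ ≤ Fintype.card α * D :=
  card_mul_le_card_mul (fun e v => v ∈ e) (fun e he => by simp [bipartiteAbove, hunif e he])
    fun v _ => hdeg v

theorem lintegral_ofReal_exp_card_le (hp : 0 ≤ p) (hunif : ∀ e ∈ F, #e = ℓ)
    (hdeg : ∀ v, #{e ∈ F | v ∈ e} ≤ D) :
    ∫⁻ ω, ENNReal.ofReal (Real.exp (#{e ∈ F | ∀ v ∈ e, ω v = true} / D))
        ∂Measure.pi (fun _ : α => bernoulliMeasure p)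
      ≤ ENNReal.ofReal (Real.exp ((Real.exp 1 - 1) * p ^ ℓ * #F / D)) := by
  let A : Finset α → Set (α → Bool) := fun e => {ω | ∀ v ∈ e, ω v = true}
  have hpt : ∀ ω : α → Bool, ENNReal.ofReal (Real.exp (#{e ∈ F | ∀ v ∈ e, ω v = true} / D))
      = ∏ e ∈ F, ENNReal.ofReal (Real.exp ((A e).indicator 1 ω)) ^ (D⁻¹ : ℝ) := by
    intro ω
    simp_rw [ENNReal.ofReal_exp_rpow, ENNReal.prod_ofReal_exp, ← sum_mul, Set.indicator_apply]
    simp [A, div_eq_mul_inv]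
  have hdep : ∀ e ∈ F, DependsOn (fun ω => ENNReal.ofReal (Real.exp ((A e).indicator 1 ω))) e :=
    fun e _ x y h => by
      have : x ∈ A e ↔ y ∈ A e := forall₂_congr fun v hv => by rw [h v hv]
      simp only [Set.indicator_apply, this, Pi.one_apply]
  calc _ = ∫⁻ ω, ∏ e ∈ F, ENNReal.ofReal (Real.exp ((A e).indicator 1 ω)) ^ (D⁻¹ : ℝ)
          ∂Measure.pi (fun _ : α => bernoulliMeasure p) := lintegral_congr hpt
    _ ≤ ∏ e ∈ F, (∫⁻ ω, ENNReal.ofReal (Real.exp ((A e).indicator 1 ω))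
          ∂Measure.pi (fun _ : α => bernoulliMeasure p)) ^ (D⁻¹ : ℝ) :=
        lintegral_prod_rpow_inv_le_of_dependsOn (fun _ _ => .of_discrete) hdep hdeg
    _ ≤ ∏ e ∈ F, ENNReal.ofReal (Real.exp ((Real.exp 1 - 1) * p ^ ℓ)) ^ (D⁻¹ : ℝ) := by
        refine prod_le_prod' fun e he => ?_
        gcongr
        refine lintegral_ofReal_exp_indicator_le .of_discrete (pow_nonneg hp ℓ) ?_
        rw [ENNReal.ofReal_pow hp, ← hunif e he]
        exact pi_bernoulliMeasure_forall_mem_le e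
    _ = _ := by
        simp_rw [ENNReal.ofReal_exp_rpow, ENNReal.prod_ofReal_exp, sum_const, nsmul_eq_mul]
        ring_nf

theorem pi_bernoulliMeasure_lt_card_le (hp : 0 ≤ p) (hunif : ∀ e ∈ F, #e = ℓ)
    (hdeg : ∀ v, #{e ∈ F | v ∈ e} ≤ D) (t : ℝ) :
    Measure.pi (fun _ : α => bernoulliMeasure p) {ω | t < #{e ∈ F | ∀ v ∈ e, ω v = true}}
      ≤ ENNReal.ofReal (Real.exp (((Real.exp 1 - 1) * p ^ ℓ * #F - t) / D)) := by
  set X : (α → Bool) → ℝ := fun ω => #{e ∈ F | ∀ v ∈ e, ω v = true}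
  have hsub : {ω | t < X ω}
      ⊆ {ω | ENNReal.ofReal (Real.exp (t / D)) ≤ ENNReal.ofReal (Real.exp (X ω / D))} :=
    fun ω hω => by
      simp only [Set.mem_ofPred_eq] at hω ⊢
      gcongr
  calc _ ≤ (∫⁻ ω, ENNReal.ofReal (Real.exp (X ω / D))
          ∂Measure.pi (fun _ : α => bernoulliMeasure p)) / ENNReal.ofReal (Real.exp (t / D)) :=
        (measure_mono hsub).trans <| meas_ge_le_lintegral_div Measurable.of_discrete.aemeasurable
          (by simp [Real.exp_pos]) ENNReal.ofReal_ne_top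
    _ ≤ ENNReal.ofReal (Real.exp ((Real.exp 1 - 1) * p ^ ℓ * #F / D))
          / ENNReal.ofReal (Real.exp (t / D)) := by
        gcongr
        exact lintegral_ofReal_exp_card_le hp hunif hdeg
    _ = _ := by
        rw [← ENNReal.ofReal_div_of_pos (Real.exp_pos _), ← Real.exp_sub, sub_div]

end RandomSubset

theorem chernoff_exponent_le {q m n ℓ D L : ℝ} (hq : 0 ≤ q) (hm : 0 ≤ m) (hℓ : 0 < ℓ)
    (hD : 0 < D) (hmℓ : m * ℓ ≤ n * D) :
    ((Real.exp 1 - 1) * q * m - 5 * D * (q * n / ℓ + L)) / D ≤ -(5 * L) := by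
  have he : Real.exp 1 - 1 ≤ 5 := by linarith [Real.exp_one_lt_d9]
  have hqm : q * m ≤ q * n / ℓ * D := by
    rw [div_mul_eq_mul_div, le_div_iff₀ hℓ]
    nlinarith
  rw [div_le_iff₀ hD]
  nlinarith [mul_le_mul_of_nonneg_right he (mul_nonneg hq hm)]

theorem exp_neg_five_mul_log_le {n D : ℝ} (hn : 1 ≤ n) (hD : 1 ≤ D) :
    Real.exp (-(5 * Real.log n)) ≤ 2 * D * n ^ (-4 : ℤ) := by
  have hn5 : Real.exp (5 * Real.log n) = n ^ 5 := by
    rw [show (5 : ℝ) * Real.log n = Real.log (n ^ 5) by rw [Real.log_pow]; norm_num,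
      Real.exp_log (by positivity)]
  rw [Real.exp_neg, hn5, zpow_neg]
  calc (n ^ 5)⁻¹ ≤ (n ^ 4)⁻¹ := inv_anti₀ (by positivity) (pow_le_pow_right₀ hn (by norm_num))
    _ ≤ 2 * D * (n ^ 4)⁻¹ := le_mul_of_one_le_left (by positivity) (by linarith)

open scoped Classical in
theorem stmt_4_general (n ℓ D : ℕ) [NeZero n] (hℓ : 1 ≤ ℓ) (p : ℝ)
    (hp0 : 0 ≤ p)
    (F : Finset (Finset (ZMod n))) (hunif : ∀ e ∈ F, e.card = ℓ)
    (hdeg : ∀ v : ZMod n, (F.filter (fun e => v ∈ e)).card ≤ D) :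
    ENNReal.ofReal (1 - 2 * D * (n : ℝ) ^ (-4 : ℤ)) ≤
      binomMeasure n p {ω | ((F.filter (fun e => ∀ v ∈ e, ω v = true)).card : ℝ)
        ≤ 5 * D * (p ^ ℓ * n / ℓ + Real.log n)} := by
  have hcard : #F * ℓ ≤ n * D := by simpa using card_mul_le_card_mul_of_degree_le hunif hdeg
  rcases Nat.eq_zero_or_pos D with rfl | hD
  · have hF : F = ∅ := (by simpa using hcard : F = ∅ ∨ ℓ = 0).resolve_right (by omega)
    simp [hF]
  refine ofReal_one_sub_le_measure .of_discrete (by positivity) ?_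
  simp_rw [Set.compl_ofPred, not_le]
  refine (pi_bernoulliMeasure_lt_card_le hp0 hunif hdeg _).trans (ENNReal.ofReal_le_ofReal ?_)
  calc _ ≤ Real.exp (-(5 * Real.log n)) := Real.exp_le_exp.mpr <|
        chernoff_exponent_le (by positivity) (by positivity) (by positivity) (by positivity)
          (by exact_mod_cast hcard)
    _ ≤ _ := exp_neg_five_mul_log_le (by simp [Nat.one_le_iff_ne_zero, NeZero.ne])
        (by exact_mod_cast hD)

open scoped Classical in
theorem stmt_4 (n ℓ D : ℕ) [NeZero n] (hn : 2 ≤ n) (hℓ : 1 ≤ ℓ) (p : ℝ)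
    (hp0 : 0 ≤ p) (hp1 : p ≤ 1)
    (F : Finset (Finset (ZMod n))) (hunif : ∀ e ∈ F, e.card = ℓ)
    (hdeg : ∀ v : ZMod n, (F.filter (fun e => v ∈ e)).card ≤ D) :
    ENNReal.ofReal (1 - 2 * D * (n : ℝ) ^ (-4 : ℤ)) ≤
      binomMeasure n p {ω | ((F.filter (fun e => ∀ v ∈ e, ω v = true)).card : ℝ)
        ≤ 5 * D * (p ^ ℓ * n / ℓ + Real.log n)} :=
  stmt_4_general n ℓ D hℓ p hp0 F hunif hdeg
end

section
/- Let (Z, B, X) be a triple of subsets of Z/nZ such that for every x ∈ X the pair (Z, B + x) is interacting, i.e., Z ↛ (k-AP)₂, B + x ↛ (k-AP)₂, but Z ∪ (B + x) → (k-AP)₂. Fix a 2-colouring σ of B = {b₁,...,b_{|B|}} with no monochromatic k-AP, and colour each translate B + x by σ_x(b_i + x) = σ(b_i). Then for every 2-colouring φ of Z with no monochromatic k-AP, the set A_φ = ⋃_{x∈X} {z ∈ Z : z is activated by σ_x and φ} is a hitting set of the hypergraph H(Z, B, X). -/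
/-- `S` is an arithmetic progression of length `k` in `ZMod n`. -/
def IsAP (n k : ℕ) (S : Finset (ZMod n)) : Prop :=
  S.card = k ∧ ∃ a d : ZMod n, S = (Finset.range k).image (fun i : ℕ => (a + (i : ZMod n) * d))

/-- `A → (k-AP)₂`: every 2-colouring of `A` yields a monochromatic `k`-AP inside `A`. -/
def HasVdW (n k : ℕ) (A : Finset (ZMod n)) : Prop :=
  ∀ χ : ZMod n → Bool, ∃ S : Finset (ZMod n), IsAP n k S ∧ S ⊆ A ∧ ∃ t : Bool, ∀ s ∈ S, χ s = t

/-- `a` focuses on `b` (relative to `A` and `B`): there are `k-2` further elements of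
`A ∪ B` forming a `k`-AP together with `a` and `b`. -/
def Focuses (n k : ℕ) (A B : Finset (ZMod n)) (a b : ZMod n) : Prop :=
  ∃ P : Finset (ZMod n), P ⊆ A ∪ B ∧ P.card = k - 2 ∧ a ∉ P ∧ b ∉ P ∧
    IsAP n k (insert a (insert b P))

open scoped Classical in
/-- `M(A,B)`: the elements of `A` focusing on some element of `B`. -/
noncomputable def Mset (n k : ℕ) (A B : Finset (ZMod n)) : Finset (ZMod n) :=
  A.filter (fun a => ∃ b ∈ B, Focuses n k A B a b)

open scoped Classical in
/-- The set of vertices of `M(Z, B+x)` activated by the colourings `σ_x` (the translate of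
`σ`) and `φ`: vertices `z` focusing on some `b ∈ B+x` via a `k`-AP which is monochromatic
under the combined colouring, with `φ z = σ_x b`. -/
noncomputable def Activated (n k : ℕ) (Z B : Finset (ZMod n)) (σ φ : ZMod n → Bool)
    (x : ZMod n) : Finset (ZMod n) :=
  (Mset n k Z (B.image (· + x))).filter (fun z =>
    ∃ b ∈ B.image (· + x), ∃ P : Finset (ZMod n), P ⊆ Z ∪ B.image (· + x) ∧
      P.card = k - 2 ∧ z ∉ P ∧ b ∉ P ∧ IsAP n k (insert z (insert b P)) ∧
      (∀ v ∈ insert z (insert b P), (if v ∈ Z then φ v else σ (v - x)) = φ z) ∧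
      φ z = σ (b - x))

lemma isAP_image_add {n k : ℕ} {S : Finset (ZMod n)} (h : IsAP n k S) (c : ZMod n) :
    IsAP n k (S.image (· + c)) := by
  obtain ⟨hcard, a, d, hS⟩ := h
  refine ⟨by rw [Finset.card_image_of_injective _ (add_left_injective c)]; exact hcard,
    a + c, d, ?_⟩
  rw [hS, Finset.image_image]
  apply Finset.image_congr
  intro i _
  simp only [Function.comp_apply]
  ring

theorem stmt_12 (n k : ℕ) [NeZero n] (hk : 3 ≤ k) (Z B X : Finset (ZMod n))
    (σ φ : ZMod n → Bool)
    (hinter : ∀ x ∈ X, ¬ HasVdW n k Z ∧ ¬ HasVdW n k (B.image (· + x)) ∧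
        HasVdW n k (Z ∪ B.image (· + x)))
    (hσ : ¬ ∃ S : Finset (ZMod n), IsAP n k S ∧ S ⊆ B ∧ ∃ t : Bool, ∀ s ∈ S, σ s = t)
    (hφ : ¬ ∃ S : Finset (ZMod n), IsAP n k S ∧ S ⊆ Z ∧ ∃ t : Bool, ∀ s ∈ S, φ s = t) :
    ∀ x ∈ X, ((X.biUnion (fun y => Activated n k Z B σ φ y)) ∩
        Mset n k Z (B.image (· + x))).Nonempty := by
  classical
  intro x hx
  obtain ⟨-, -, hvdw⟩ := hinter x hx
  set χ : ZMod n → Bool := fun v => if v ∈ Z then φ v else σ (v - x) with hχ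
  obtain ⟨S, hAP, hsub, t, hmono⟩ := hvdw χ
  -- S cannot be entirely inside Z
  have hSnotZ : ¬ S ⊆ Z := by
    intro hSZ
    exact hφ ⟨S, hAP, hSZ, t, fun s hs => by
      have := hmono s hs; simpa [hχ, hSZ hs] using this⟩
  obtain ⟨b, hbS, hbZ⟩ := Finset.not_subset.mp hSnotZ
  have hbB : b ∈ B.image (· + x) := by
    rcases Finset.mem_union.mp (hsub hbS) with h | h
    · exact absurd h hbZ
    · exact h
  -- S must meet Z
  have hSmeetZ : ∃ z ∈ S, z ∈ Z := by
    by_contra h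
    push_neg at h
    apply hσ
    refine ⟨S.image (· + (-x)), isAP_image_add hAP (-x), ?_, t, ?_⟩
    · intro s hs
      obtain ⟨v, hv, rfl⟩ := Finset.mem_image.mp hs
      rcases Finset.mem_union.mp (hsub hv) with h' | h'
      · exact absurd h' (h v hv)
      · obtain ⟨w, hw, rfl⟩ := Finset.mem_image.mp h'
        simpa using hw
    · intro s hs
      obtain ⟨v, hv, rfl⟩ := Finset.mem_image.mp hs
      have := hmono v hv
      simp only [hχ, if_neg (h v hv)] at this
      simpa [sub_eq_add_neg] using this
  obtain ⟨z, hzS, hzZ⟩ := hSmeetZ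
  have hzb : z ≠ b := fun h => hbZ (h ▸ hzZ)
  set P := (S.erase z).erase b with hP
  have hbP : b ∉ P := Finset.notMem_erase _ _
  have hzP : z ∉ P := fun h => Finset.notMem_erase z _ (Finset.mem_of_mem_erase h)
  have hins : insert z (insert b P) = S := by
    rw [hP, Finset.insert_erase (Finset.mem_erase.mpr ⟨Ne.symm hzb, hbS⟩),
      Finset.insert_erase hzS]
  have hPsub : P ⊆ Z ∪ B.image (· + x) := fun p hp =>
    hsub (Finset.mem_of_mem_erase (Finset.mem_of_mem_erase hp))
  have hPcard : P.card = k - 2 := by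
    rw [hP, Finset.card_erase_of_mem (Finset.mem_erase.mpr ⟨Ne.symm hzb, hbS⟩),
      Finset.card_erase_of_mem hzS, hAP.1]; omega
  have hAPins : IsAP n k (insert z (insert b P)) := hins ▸ hAP
  have hφz : φ z = t := by
    have := hmono z hzS
    simpa [hχ, hzZ] using this
  have hmono' : ∀ v ∈ insert z (insert b P), (if v ∈ Z then φ v else σ (v - x)) = φ z := by
    intro v hv
    rw [hφz]
    exact hmono v (hins ▸ hv)
  have hφzσ : φ z = σ (b - x) := by
    have := hmono b hbS
    rw [hφz, ← this]
    simp [hχ, hbZ]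
  have hzM : z ∈ Mset n k Z (B.image (· + x)) := by
    simp only [Mset, Finset.mem_filter]
    exact ⟨hzZ, b, hbB, P, hPsub, hPcard, hzP, hbP, hAPins⟩
  have hzA : z ∈ Activated n k Z B σ φ x := by
    simp only [Activated, Finset.mem_filter]
    exact ⟨hzM, b, hbB, P, hPsub, hPcard, hzP, hbP, hAPins, hmono', hφzσ⟩
  exact ⟨z, Finset.mem_inter.mpr ⟨Finset.mem_biUnion.mpr ⟨x, hx, hzA⟩, hzM⟩⟩
end
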